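/- Let φ₁, φ₂ : ℝⁿ → ℝ be convex functions of linear growth with equal recession functions (φ̄₁ = φ̄₂ on S^{n-1}). Then φ₂(x) - φ₁(x) = o(|x|) as |x| → ∞; in particular, for every R > 0 the function x ↦ max(0, R(φ₂(x) - φ₁(x)) - |x|) is continuous with compact support. -/

import Mathlib

open Filter Topology

/-- `φ` is a convex function of linear growth on `ℝⁿ`. -/
def IsLinGrowthConvex {n : ℕ} (φ : EuclideanSpace ℝ (Fin n) → ℝ) : Prop :=
  ConvexOn ℝ Set.univ φ ∧ ∃ A B : ℝ, 0 < A ∧ 0 < B ∧ ∀ x, φ x ≤ A * ‖x‖ + B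

/-- The recession function of `φ`, `φ̄(θ) = sup_{λ>0} (φ(λθ) - φ(0))/λ`. -/
noncomputable def recessionFn {n : ℕ} (φ : EuclideanSpace ℝ (Fin n) → ℝ)
    (θ : EuclideanSpace ℝ (Fin n)) : ℝ :=
  ⨆ l : {l : ℝ // 0 < l}, (φ (l.1 • θ) - φ 0) / l.1

/-!
For convex `φ` the slopes `(φ (l • θ) - φ 0) / l` increase with `l` to `recessionFn φ θ`, and
linear growth keeps them bounded, so `recessionFn φ` is a finite supremum of convex functions,
hence convex and continuous. Dini's theorem then makes the convergence uniform on the unit sphere.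
Writing `x = ‖x‖ • θ`, `φ₂ x - φ₁ x` is `φ₂ 0 - φ₁ 0` plus `‖x‖` times the difference of the two
slopes at `(‖x‖, θ)`, which tends to `0` uniformly when the recession functions agree on the
sphere. Sublinearity gives `R (φ₂ - φ₁) ≤ ‖x‖` outside a ball, whence the compact support.
-/

open Metric Set

lemma convexOn_ciSup {E ι : Type*} [AddCommGroup E] [Module ℝ E] [Nonempty ι] {s : Set E}
    {f : ι → E → ℝ}
    (hf : ∀ i, ConvexOn ℝ s (f i)) (hbdd : ∀ x ∈ s, BddAbove (range fun i => f i x)) :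
    ConvexOn ℝ s fun x => ⨆ i, f i x := by
  refine ⟨(hf (Classical.arbitrary ι)).1, fun x hx y hy a b ha hb hab => ?_⟩
  dsimp only
  refine ciSup_le fun i => ?_
  calc f i (a • x + b • y) ≤ a • f i x + b • f i y := (hf i).2 hx hy ha hb hab
    _ ≤ (a • ⨆ i, f i x) + b • ⨆ i, f i y := by
      gcongr
      exacts [le_ciSup (hbdd x hx) i, le_ciSup (hbdd y hy) i]

lemma hasCompactSupport_max_zero_mul_sub_norm {E : Type*} [NormedAddCommGroup E] [ProperSpace E]
    {f : E → ℝ} {R R₀ : ℝ}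
    (hR : 0 < R) (hf : ∀ x, R₀ ≤ ‖x‖ → |f x| ≤ R⁻¹ * ‖x‖) :
    HasCompactSupport fun x => max 0 (R * f x - ‖x‖) := by
  refine HasCompactSupport.intro (isCompact_closedBall 0 R₀) fun x hx => max_eq_left ?_
  have hfx := hf x (not_le.1 (mt mem_closedBall_zero_iff.2 hx)).le
  have : R * f x ≤ ‖x‖ := calc
    R * f x ≤ R * |f x| := by gcongr; exact le_abs_self _
    _ ≤ R * (R⁻¹ * ‖x‖) := by gcongr
    _ = ‖x‖ := by field_simp
  linarith

section RaySlope

variable {E : Type*} [NormedAddCommGroup E] [NormedSpace ℝ E] {φ : E → ℝ}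

/-- `recessionFn φ θ` is by definition `⨆ l, raySlope φ l θ`. -/
noncomputable def raySlope (φ : E → ℝ) (l : {l : ℝ // 0 < l}) (θ : E) : ℝ :=
  (φ (l.1 • θ) - φ 0) / l.1

lemma eq_add_norm_mul_raySlope (φ : E → ℝ) {x : E} (hx : 0 < ‖x‖) :
    φ x = φ 0 + ‖x‖ * raySlope φ ⟨‖x‖, hx⟩ (‖x‖⁻¹ • x) := by
  rw [raySlope, smul_inv_smul₀ hx.ne', mul_div_cancel₀ _ hx.ne']
  ring

lemma continuous_raySlope (hφ : Continuous φ) (l : {l : ℝ // 0 < l}) :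
    Continuous (raySlope φ l) := by
  unfold raySlope
  fun_prop

lemma ConvexOn.monotone_raySlope (hφ : ConvexOn ℝ univ φ) : Monotone (raySlope φ) := by
  intro s t hst θ
  have := (hφ.comp_linearMap (LinearMap.toSpanSingleton ℝ E θ)).secant_mono (a := 0)
    trivial trivial trivial s.2.ne' t.2.ne' hst
  simpa [raySlope] using this

lemma ConvexOn.convexOn_raySlope (hφ : ConvexOn ℝ univ φ) (l : {l : ℝ // 0 < l}) :
    ConvexOn ℝ univ (raySlope φ l) := by
  have := ((hφ.comp_linearMap (l.1 • LinearMap.id)).add_const (-φ 0)).smul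
    (inv_nonneg.2 l.2.le)
  rw [preimage_univ] at this
  exact this.congr fun θ _ => by simp [raySlope, div_eq_inv_mul, sub_eq_add_neg]

lemma ConvexOn.raySlope_le_of_le_linear (hφ : ConvexOn ℝ univ φ) {A B : ℝ}
    (hAB : ∀ x, φ x ≤ A * ‖x‖ + B) (l : {l : ℝ // 0 < l}) (θ : E) :
    raySlope φ l θ ≤ A * ‖θ‖ + |B - φ 0| := by
  set m : {l : ℝ // 0 < l} := ⟨max l.1 1, lt_max_of_lt_right one_pos⟩
  have hm : 1 ≤ m.1 := le_max_right _ _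
  have hm₀ : 0 < m.1 := m.2
  have hgrowth : φ (m.1 • θ) ≤ m.1 * (A * ‖θ‖) + B := by
    have := hAB (m.1 • θ)
    rwa [norm_smul, Real.norm_of_nonneg hm₀.le, mul_left_comm] at this
  calc raySlope φ l θ ≤ raySlope φ m θ := hφ.monotone_raySlope (le_max_left l.1 1) θ
    _ ≤ (m.1 * (A * ‖θ‖) + B - φ 0) / m.1 := by unfold raySlope; gcongr
    _ = A * ‖θ‖ + (B - φ 0) / m.1 := by field_simp; ring
    _ ≤ A * ‖θ‖ + |B - φ 0| := by
      gcongr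
      exact (div_le_div_of_nonneg_right (le_abs_self _) hm₀.le).trans
        (div_le_self (abs_nonneg _) hm)

end RaySlope

namespace IsLinGrowthConvex

variable {n : ℕ} {φ φ₁ φ₂ : EuclideanSpace ℝ (Fin n) → ℝ}

lemma continuous (h : IsLinGrowthConvex φ) : Continuous φ :=
  continuousOn_univ.1 (h.1.continuousOn isOpen_univ)

lemma bddAbove_range_raySlope (h : IsLinGrowthConvex φ) (θ : EuclideanSpace ℝ (Fin n)) :
    BddAbove (range fun l => raySlope φ l θ) := by
  obtain ⟨hconv, A, B, -, -, hAB⟩ := h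
  exact ⟨_, forall_mem_range.2 fun l => hconv.raySlope_le_of_le_linear hAB l θ⟩

lemma continuous_recessionFn (h : IsLinGrowthConvex φ) : Continuous (recessionFn φ) :=
  continuousOn_univ.1 <| (convexOn_ciSup h.1.convexOn_raySlope
    fun θ _ => h.bddAbove_range_raySlope θ).continuousOn isOpen_univ

lemma tendstoUniformlyOn_raySlope (h : IsLinGrowthConvex φ) {K : Set (EuclideanSpace ℝ (Fin n))}
    (hK : IsCompact K) : TendstoUniformlyOn (raySlope φ) (recessionFn φ) atTop K :=
  Monotone.tendstoUniformlyOn_of_forall_tendsto hK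
    (fun l => (continuous_raySlope h.continuous l).continuousOn)
    (fun θ _ _ _ hll' => h.1.monotone_raySlope hll' θ) h.continuous_recessionFn.continuousOn
    fun θ _ => tendsto_atTop_ciSup (fun _ _ hll' => h.1.monotone_raySlope hll' θ)
      (h.bddAbove_range_raySlope θ)

lemma abs_sub_le_mul_norm_of_recessionFn_eq (h₁ : IsLinGrowthConvex φ₁)
    (h₂ : IsLinGrowthConvex φ₂)
    (hrec : ∀ θ : EuclideanSpace ℝ (Fin n), ‖θ‖ = 1 → recessionFn φ₁ θ = recessionFn φ₂ θ)
    {ε : ℝ} (hε : 0 < ε) :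
    ∃ R : ℝ, ∀ x : EuclideanSpace ℝ (Fin n), R ≤ ‖x‖ → |φ₂ x - φ₁ x| ≤ ε * ‖x‖ := by
  have hunif := (h₂.tendstoUniformlyOn_raySlope (isCompact_sphere 0 1)).sub
    (h₁.tendstoUniformlyOn_raySlope (isCompact_sphere 0 1))
  obtain ⟨L, hL⟩ := eventually_atTop.1 (tendstoUniformlyOn_iff.1 hunif (ε / 2) (half_pos hε))
  refine ⟨max L.1 (2 * |φ₂ 0 - φ₁ 0| / ε), fun x hx => ?_⟩
  have hLx : L.1 ≤ ‖x‖ := (le_max_left _ _).trans hx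
  have hx₀ : 0 < ‖x‖ := L.2.trans_le hLx
  have hθ : ‖x‖⁻¹ • x ∈ sphere 0 1 := by simp [norm_smul, hx₀.ne']
  have hslope := hL ⟨‖x‖, hx₀⟩ hLx _ hθ
  rw [Pi.sub_apply, Pi.sub_apply, hrec _ (mem_sphere_zero_iff_norm.1 hθ), sub_self,
    dist_zero_left, Real.norm_eq_abs] at hslope
  have hconst : |φ₂ 0 - φ₁ 0| ≤ ε / 2 * ‖x‖ := by
    have := (le_max_right _ _).trans hx
    rw [div_le_iff₀ hε] at this
    linarith
  have hsplit : φ₂ x - φ₁ x = (φ₂ 0 - φ₁ 0) +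
      ‖x‖ * (raySlope φ₂ ⟨‖x‖, hx₀⟩ - raySlope φ₁ ⟨‖x‖, hx₀⟩) (‖x‖⁻¹ • x) := by
    rw [Pi.sub_apply, eq_add_norm_mul_raySlope φ₂ hx₀, eq_add_norm_mul_raySlope φ₁ hx₀]
    ring
  calc |φ₂ x - φ₁ x|
      ≤ |φ₂ 0 - φ₁ 0| +
          ‖x‖ * |(raySlope φ₂ ⟨‖x‖, hx₀⟩ - raySlope φ₁ ⟨‖x‖, hx₀⟩) (‖x‖⁻¹ • x)| := by
        rw [hsplit]
        exact (abs_add_le _ _).trans_eq (by rw [abs_mul, abs_norm])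
    _ ≤ ε / 2 * ‖x‖ + ‖x‖ * (ε / 2) := by gcongr
    _ = ε * ‖x‖ := by ring

end IsLinGrowthConvex

/-- If two convex functions of linear growth have the same recession function,
their difference is `o(|x|)`, and `max(0, R(φ₂-φ₁) - |x|)` is continuous with
compact support for every `R > 0`. -/
theorem sublinear_difference_of_equal_recession {n : ℕ}
    (φ₁ φ₂ : EuclideanSpace ℝ (Fin n) → ℝ)
    (h₁ : IsLinGrowthConvex φ₁) (h₂ : IsLinGrowthConvex φ₂)
    (hrec : ∀ θ : EuclideanSpace ℝ (Fin n), ‖θ‖ = 1 →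
      recessionFn φ₁ θ = recessionFn φ₂ θ) :
    (∀ ε : ℝ, 0 < ε → ∃ R : ℝ, ∀ x : EuclideanSpace ℝ (Fin n),
        R ≤ ‖x‖ → |φ₂ x - φ₁ x| ≤ ε * ‖x‖) ∧
      ∀ R : ℝ, 0 < R →
        Continuous (fun x : EuclideanSpace ℝ (Fin n) =>
          max 0 (R * (φ₂ x - φ₁ x) - ‖x‖)) ∧
        HasCompactSupport (fun x : EuclideanSpace ℝ (Fin n) =>
          max 0 (R * (φ₂ x - φ₁ x) - ‖x‖)) := by
  have hsub := fun ε (hε : 0 < ε) => h₁.abs_sub_le_mul_norm_of_recessionFn_eq h₂ hrec hε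
  refine ⟨hsub, fun R hR => ⟨?_, ?_⟩⟩
  · have := h₁.continuous
    have := h₂.continuous
    fun_prop
  · obtain ⟨R₀, hR₀⟩ := hsub R⁻¹ (inv_pos.2 hR)
    exact hasCompactSupport_max_zero_mul_sub_norm hR hR₀
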